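/- A function ℓ : Ob(C) → ℕ on a category C with terminal object 1 lifts to a stratification functor L : C → (ℕ, ≥) if and only if: (i) ℓ(1) = 0; (ii) for every object X and every k ≤ ℓ(X), there is a unique pair (Y, f) with ℓ(Y) = k and f : X → Y; and (iii) there are no arrows X → Y with ℓ(X) < ℓ(Y). -/

import Mathlib

open CategoryTheory

universe v u

/-- A chain of "individual" arrows, i.e. arrows decreasing the level function `L`
by exactly `1` at each step. -/
inductive IndivChain {C : Type u} [Category.{v} C] (L : C → ℕ) : C → C → Type (max u v)
  | nil (X : C) : IndivChain L X X
  | cons {X Y Z : C} (f : X ⟶ Y) (hf : L X = L Y + 1) (c : IndivChain L Y Z) :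
      IndivChain L X Z

/-- The composite of a chain of individual arrows. -/
def IndivChain.comp {C : Type u} [Category.{v} C] {L : C → ℕ} :
    {X Y : C} → IndivChain L X Y → (X ⟶ Y)
  | _, _, .nil X => 𝟙 X
  | _, _, .cons f _ c => f ≫ c.comp

/-- An arrow is individual (with respect to a level function `L`) if it decreases `L`
by exactly one. -/
def IsIndividual {C : Type u} [Category.{v} C] (L : C → ℕ) {X Y : C} (_f : X ⟶ Y) : Prop :=
  L X = L Y + 1

/-- A stratification of a strict category `C` with chosen terminal object `one`.
It consists of a functor `L : C ⥤ (ℕ, ≥)` (a level function which is antitone along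
arrows) such that:
* `L X = 0` iff `X` is the chosen terminal object;
* any arrow `f : X ⟶ Y` with `L X = L Y` is an identity (up to equality of objects);
* every arrow `f : X ⟶ Y` which strictly decreases `L` factors uniquely as a composite
  of individual arrows (each decreasing `L` by exactly one). -/
structure Stratification (C : Type u) [Category.{v} C] (one : C) where
  L : C → ℕ
  mono : ∀ {X Y : C}, (X ⟶ Y) → L Y ≤ L X
  zero_iff : ∀ X : C, L X = 0 ↔ X = one
  level_eq : ∀ {X Y : C} (f : X ⟶ Y), L X = L Y → ∃ h : X = Y, f = eqToHom h
  fact : ∀ {X Y : C} (f : X ⟶ Y), L Y < L X →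
    ∃ c : IndivChain L X Y, c.comp = f ∧ ∀ c' : IndivChain L X Y, c'.comp = f → c' = c

/-!
Given a stratification, every arrow is the composite of a chain of individual arrows, and all
chains `X ⟶ 1` are equal since they compose to the unique arrow to the terminal object;
truncating that chain at level `k` yields the unique arrow out of `X` to level `k`.
Conversely, if arrows out of `X` to each level `k ≤ ℓ X` are unique, then an arrow preserving
the level is an identity, an arrow decreasing it is unique among arrows with the same ends,
descending one level at a time factors it into individual arrows, and such a chain is unique
because each of its steps is determined by its level.
-/

variable {C : Type u} [Category.{v} C]

namespace IndivChain

variable {L : C → ℕ}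

theorem level_le : ∀ {X Y : C}, IndivChain L X Y → L Y ≤ L X
  | _, _, .nil _ => le_rfl
  | _, _, .cons _ hf c => by have := level_le c; omega

theorem eq_of_level_eq {X Y : C} (h : L X = L Y) (c c' : IndivChain L X Y) : c = c' := by
  cases c with
  | nil =>
    cases c' with
    | nil => rfl
    | cons _ hf d => have := level_le d; omega
  | cons _ hf d => have := level_le d; omega

def append : ∀ {X Y Z : C}, IndivChain L X Y → IndivChain L Y Z → IndivChain L X Z
  | _, _, _, .nil _, d => d
  | _, _, _, .cons f hf c, d => .cons f hf (c.append d)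

theorem comp_append : ∀ {X Y Z : C} (c : IndivChain L X Y) (d : IndivChain L Y Z),
    (c.append d).comp = c.comp ≫ d.comp
  | _, _, _, .nil _, d => by simp [append, comp]
  | _, _, _, .cons f hf c, d => by simp [append, comp, comp_append c d]

/-- The composite of the initial segment of `c` ending at the first object of level `k`. -/
def prefixTo : ∀ {X Z : C}, IndivChain L X Z → ℕ → Σ Y : C, X ⟶ Y
  | X, _, .nil _, _ => ⟨X, 𝟙 X⟩
  | X, _, .cons f _ c, k =>
      if L X = k then ⟨X, 𝟙 X⟩ else ⟨(c.prefixTo k).1, f ≫ (c.prefixTo k).2⟩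

theorem level_prefixTo : ∀ {X Z : C} (c : IndivChain L X Z) (k : ℕ),
    L Z ≤ k → k ≤ L X → L (c.prefixTo k).1 = k
  | _, _, .nil _, _, hZ, hX => by simp only [prefixTo]; omega
  | X, _, .cons _ hf c, k, hZ, hX => by
      by_cases hk : L X = k
      · simp [prefixTo, hk]
      · rw [prefixTo, if_neg hk]
        exact level_prefixTo c k hZ (by omega)

theorem prefixTo_append : ∀ {X Y Z : C} (c : IndivChain L X Y) (d : IndivChain L Y Z),
    (c.append d).prefixTo (L Y) = ⟨Y, c.comp⟩
  | _, _, _, .nil _, .nil _ => by simp [append, prefixTo, comp]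
  | _, _, _, .nil _, .cons _ _ _ => by simp [append, prefixTo, comp]
  | _, _, _, .cons _ hf c, d => by
      have := level_le c
      rw [append, prefixTo, if_neg (by omega), prefixTo_append c d]
      rfl

end IndivChain

namespace Stratification

variable {one : C} (S : Stratification C one)

theorem level_one : S.L one = 0 := (S.zero_iff one).mpr rfl

theorem exists_chain {X Y : C} (f : X ⟶ Y) : ∃ c : IndivChain S.L X Y, c.comp = f := by
  rcases (S.mono f).lt_or_eq with hlt | heq
  · obtain ⟨c, hc, -⟩ := S.fact f hlt
    exact ⟨c, hc⟩
  · obtain ⟨rfl, rfl⟩ := S.level_eq f heq.symm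
    exact ⟨.nil X, rfl⟩

theorem chain_ext {X Y : C} {c c' : IndivChain S.L X Y} (h : c.comp = c'.comp) : c = c' := by
  rcases c.level_le.lt_or_eq with hlt | heq
  · obtain ⟨d, -, hd⟩ := S.fact c'.comp hlt
    exact (hd c h).trans (hd c' rfl).symm
  · exact IndivChain.eq_of_level_eq heq.symm c c'

end Stratification

def HasUniqueHomToLevel (L : C → ℕ) : Prop :=
  ∀ (X : C) (k : ℕ), k ≤ L X → ∃! p : Σ Y : C, X ⟶ Y, L p.1 = k

theorem Stratification.hasUniqueHomToLevel {one : C} (S : Stratification C one)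
    (hone : Limits.IsTerminal one) : HasUniqueHomToLevel S.L := by
  intro X k hk
  obtain ⟨c, -⟩ := S.exists_chain (hone.from X)
  refine ⟨c.prefixTo k, c.level_prefixTo k (by rw [S.level_one]; omega) hk, ?_⟩
  rintro ⟨Y, f⟩ rfl
  obtain ⟨d, rfl⟩ := S.exists_chain f
  obtain ⟨e, -⟩ := S.exists_chain (hone.from Y)
  have hc : d.append e = c :=
    S.chain_ext (by rw [IndivChain.comp_append]; exact hone.hom_ext _ _)
  rw [← hc, IndivChain.prefixTo_append]

namespace HasUniqueHomToLevel

variable {L : C → ℕ} (hu : HasUniqueHomToLevel L)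
include hu

theorem sigma_eq {X Y Y' : C} (f : X ⟶ Y) (f' : X ⟶ Y') (hY : L Y ≤ L X) (h : L Y = L Y') :
    (⟨Y, f⟩ : Σ Z, X ⟶ Z) = ⟨Y', f'⟩ :=
  (hu X _ hY).unique rfl h.symm

theorem hom_ext {X Y : C} (hY : L Y ≤ L X) (f g : X ⟶ Y) : f = g :=
  eq_of_heq (Sigma.mk.inj_iff.mp (hu.sigma_eq f g hY rfl)).2

theorem eq_id_of_level_eq {X Y : C} (f : X ⟶ Y) (hL : L X = L Y) :
    ∃ h : X = Y, f = eqToHom h := by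
  obtain ⟨rfl, hf⟩ := Sigma.mk.inj_iff.mp (hu.sigma_eq (𝟙 X) f le_rfl hL)
  exact ⟨rfl, (eq_of_heq hf).symm⟩

theorem nonempty_chain :
    ∀ (n : ℕ) {X Y : C}, (X ⟶ Y) → L X = L Y + n → Nonempty (IndivChain L X Y)
  | 0, X, _, f, h => by
    obtain ⟨rfl, -⟩ := hu.eq_id_of_level_eq f (by omega)
    exact ⟨.nil X⟩
  | n + 1, X, Y, f, h => by
    obtain ⟨⟨Z, g⟩, hZ : L Z = L X - 1, -⟩ := hu X (L X - 1) (Nat.sub_le _ _)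
    obtain ⟨⟨W, g'⟩, hW : L W = L Y, -⟩ := hu Z (L Y) (by omega)
    obtain ⟨rfl, -⟩ := Sigma.mk.inj_iff.mp (hu.sigma_eq (g ≫ g') f (by omega) hW)
    obtain ⟨c⟩ := nonempty_chain n g' (by omega)
    exact ⟨.cons g (by omega) c⟩

theorem chain_eq : ∀ {X Y : C} (c c' : IndivChain L X Y), c = c'
  | _, _, .nil _, c' => IndivChain.eq_of_level_eq rfl _ c'
  | _, _, .cons f hf d, .nil _ => by have := d.level_le; omega
  | _, _, .cons f hf d, .cons f' hf' d' => by
    obtain ⟨rfl, hff'⟩ := Sigma.mk.inj_iff.mp (hu.sigma_eq f f' (by omega) (by omega))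
    obtain rfl := eq_of_heq hff'
    rw [chain_eq d d']

def toStratification {one : C} (hone : Limits.IsTerminal one) (h_one : L one = 0)
    (mono : ∀ {X Y : C}, (X ⟶ Y) → L Y ≤ L X) : Stratification C one where
  L := L
  mono := mono
  zero_iff X := ⟨fun h => congrArg Sigma.fst
    (hu.sigma_eq (𝟙 X) (hone.from X) le_rfl (h.trans h_one.symm)),
    fun h => h ▸ h_one⟩
  level_eq := hu.eq_id_of_level_eq
  fact f hlt := by
    obtain ⟨c⟩ := hu.nonempty_chain _ f (Nat.add_sub_of_le (mono f)).symm
    exact ⟨c, hu.hom_ext (mono f) _ _, fun c' _ => hu.chain_eq c' c⟩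

end HasUniqueHomToLevel

/-- A function `ℓ : Ob(C) → ℕ` on a category `C` with terminal object `1`
lifts to a stratification functor `L : C ⥤ (ℕ, ≥)` if and only if:
(i) `ℓ 1 = 0`;
(ii) for every object `X` and every `k ≤ ℓ X` there is a unique pair `(Y, f)` with
`f : X ⟶ Y` and `ℓ Y = k`; and
(iii) there are no arrows `X ⟶ Y` with `ℓ X < ℓ Y`. -/
theorem stratification_lift_iff {C : Type u} [Category.{v} C] (one : C)
    (hone : Limits.IsTerminal one) (ℓ : C → ℕ) :
    (∃ S : Stratification C one, S.L = ℓ) ↔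
      (ℓ one = 0
        ∧ (∀ (X : C) (k : ℕ), k ≤ ℓ X → ∃! p : Σ Y : C, X ⟶ Y, ℓ p.1 = k)
        ∧ (∀ {X Y : C}, (X ⟶ Y) → ¬ ℓ X < ℓ Y)) := by
  constructor
  · rintro ⟨S, rfl⟩
    exact ⟨S.level_one, S.hasUniqueHomToLevel hone, fun f => not_lt.mpr (S.mono f)⟩
  · rintro ⟨h_one, hu, no_up⟩
    exact ⟨HasUniqueHomToLevel.toStratification hu hone h_one fun f => not_lt.mp (no_up f), rfl⟩
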